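/- Let G be a finite group and let H and K be CD-subgroups of G. Then the set product HK equals KH; in particular, HK is a subgroup of G. -/

import Mathlib

/-!
For subgroups `H`, `K` of a finite group, `|H| |K| = |HK| |H ∩ K| ≤ |⟨H, K⟩| |H ∩ K|`, that is
`|G : ⟨H, K⟩| |G : H ∩ K| ≤ |G : H| |G : K|`, with equality exactly when `HK = ⟨H, K⟩`.
Since `C(⟨H, K⟩) = C(H) ∩ C(K)` and `C(H ∩ K) ⊇ ⟨C(H), C(K)⟩`, the same inequality applied to
`C(H)`, `C(K)` gives `m(⟨H, K⟩) m(H ∩ K) ≤ m(H) m(K)`. For CD-subgroups the right side is `μ²`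
while both factors on the left are at least `μ`, so equality holds throughout; in particular
`HK = ⟨H, K⟩ = KH`.
-/

open Pointwise

/-- The Chermak–Delgado index-measure of a subgroup `H` of `G`:
`m(G,H) = |G:H| * |G:C_G(H)|`. -/
noncomputable def cdMeasure {G : Type*} [Group G] (H : Subgroup G) : ℕ :=
  H.index * (Subgroup.centralizer (H : Set G)).index

/-- `μ(G)`, the minimum of `m(G,H)` over all subgroups `H ≤ G`. -/
noncomputable def cdMu (G : Type*) [Group G] : ℕ :=
  sInf {n : ℕ | ∃ H : Subgroup G, cdMeasure H = n}

/-- A subgroup `H ≤ G` is a CD-subgroup if `m(G,H) = μ(G)`. -/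
def IsCDSubgroup {G : Type*} [Group G] (H : Subgroup G) : Prop :=
  cdMeasure H = cdMu G

namespace Subgroup

variable {G : Type*} [Group G]

theorem natCard_image_mk_eq_relIndex (H K : Subgroup G) :
    Nat.card ((↑) '' (H : Set G) : Set (G ⧸ K)) = K.relIndex H := by
  have hsmul (h : H) : h • ((1 : G) : G ⧸ K) = ((h : G) : G ⧸ K) := congrArg _ (mul_one _)
  have hstab : K.subgroupOf H = MulAction.stabilizer H ((1 : G) : G ⧸ K) := by
    ext h
    rw [mem_subgroupOf, MulAction.mem_stabilizer_iff, hsmul, QuotientGroup.eq, mul_one, inv_mem_iff]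
  have horbit : MulAction.orbit H ((1 : G) : G ⧸ K) = (↑) '' (H : Set G) := by
    ext x
    simp [MulAction.mem_orbit_iff, hsmul]
  rw [relIndex, hstab, MulAction.index_stabilizer, horbit, Nat.card_coe_set_eq]

theorem card_mul_mul_card_inf (H K : Subgroup G) :
    Nat.card ((H : Set G) * (K : Set G)) * Nat.card (H ⊓ K : Subgroup G) =
      Nat.card H * Nat.card K := by
  have hH : Nat.card (H ⊓ K : Subgroup G) * K.relIndex H = Nat.card H := by
    rw [← inf_relIndex_left, ← relIndex_bot_left (H ⊓ K),
      relIndex_mul_relIndex ⊥ (H ⊓ K) H bot_le inf_le_left, relIndex_bot_left]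
  rw [card_mul_eq_card_subgroup_mul_card_quotient, natCard_image_mk_eq_relIndex, ← hH]
  ring

theorem mul_subset_sup (H K : Subgroup G) : (H : Set G) * (K : Set G) ⊆ (H ⊔ K : Subgroup G) :=
  Set.mul_subset_iff.mpr fun _ hx _ hy => mul_mem_sup hx hy

theorem card_mul_card_le_card_sup_mul_card_inf [Finite G] (H K : Subgroup G) :
    Nat.card H * Nat.card K ≤ Nat.card (H ⊔ K : Subgroup G) * Nat.card (H ⊓ K : Subgroup G) := by
  rw [← card_mul_mul_card_inf]
  exact Nat.mul_le_mul_right _ (Nat.card_mono (Set.toFinite _) (mul_subset_sup H K))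

theorem index_mul_index_le_iff [Finite G] {A B C D : Subgroup G} :
    A.index * B.index ≤ C.index * D.index ↔ Nat.card C * Nat.card D ≤ Nat.card A * Nat.card B := by
  have hG (X Y : Subgroup G) : X.index * Y.index * (Nat.card X * Nat.card Y) = Nat.card G ^ 2 := by
    rw [mul_mul_mul_comm, index_mul_card, index_mul_card, sq]
  have hpos (X Y : Subgroup G) : 0 < X.index * Y.index :=
    Nat.pos_of_ne_zero (mul_ne_zero X.index_ne_zero_of_finite Y.index_ne_zero_of_finite)
  have hpos' (X Y : Subgroup G) : 0 < Nat.card X * Nat.card Y :=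
    Nat.mul_pos Nat.card_pos Nat.card_pos
  constructor
  · intro h
    refine Nat.le_of_mul_le_mul_left ?_ (hpos A B)
    calc A.index * B.index * (Nat.card C * Nat.card D)
        ≤ C.index * D.index * (Nat.card C * Nat.card D) := Nat.mul_le_mul_right _ h
      _ = A.index * B.index * (Nat.card A * Nat.card B) := by rw [hG, hG]
  · intro h
    refine Nat.le_of_mul_le_mul_right ?_ (hpos' C D)
    calc A.index * B.index * (Nat.card C * Nat.card D)
        ≤ A.index * B.index * (Nat.card A * Nat.card B) := Nat.mul_le_mul_left _ h
      _ = C.index * D.index * (Nat.card C * Nat.card D) := by rw [hG, hG]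

theorem index_sup_mul_index_inf_le [Finite G] (H K : Subgroup G) :
    (H ⊔ K).index * (H ⊓ K).index ≤ H.index * K.index :=
  index_mul_index_le_iff.mpr (card_mul_card_le_card_sup_mul_card_inf H K)

theorem coe_sup_eq_mul_of_index_mul_index_le [Finite G] {H K : Subgroup G}
    (h : H.index * K.index ≤ (H ⊔ K).index * (H ⊓ K).index) :
    ((H ⊔ K : Subgroup G) : Set G) = (H : Set G) * (K : Set G) := by
  have hcard := index_mul_index_le_iff.mp h
  rw [← card_mul_mul_card_inf H K] at hcard
  refine (Set.eq_of_subset_of_ncard_le (mul_subset_sup H K) ?_ (Set.toFinite _)).symm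
  rw [← Nat.card_coe_set_eq, ← Nat.card_coe_set_eq]
  exact Nat.le_of_mul_le_mul_right hcard Nat.card_pos

theorem centralizer_sup (H K : Subgroup G) :
    centralizer ((H ⊔ K : Subgroup G) : Set G) =
      centralizer (H : Set G) ⊓ centralizer (K : Set G) := by
  rw [← closure_eq H, ← closure_eq K, ← closure_union, centralizer_closure, closure_eq, closure_eq]
  exact SetLike.coe_injective Set.centralizer_union

theorem index_centralizer_sup_mul_index_centralizer_inf_le [Finite G] (H K : Subgroup G) :
    (centralizer ((H ⊔ K : Subgroup G) : Set G)).index *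
        (centralizer ((H ⊓ K : Subgroup G) : Set G)).index ≤
      (centralizer (H : Set G)).index * (centralizer (K : Set G)).index := by
  have hinf : centralizer (H : Set G) ⊔ centralizer (K : Set G) ≤
      centralizer ((H ⊓ K : Subgroup G) : Set G) :=
    sup_le (centralizer_le Set.inter_subset_left) (centralizer_le Set.inter_subset_right)
  rw [centralizer_sup, mul_comm]
  exact (Nat.mul_le_mul_right _ (index_antitone hinf)).trans (index_sup_mul_index_inf_le _ _)

end Subgroup

theorem cdMu_le_cdMeasure {G : Type*} [Group G] (H : Subgroup G) : cdMu G ≤ cdMeasure H :=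
  Nat.sInf_le ⟨H, rfl⟩

theorem IsCDSubgroup.index_mul_index_le {G : Type*} [Group G] [Finite G] {H K : Subgroup G}
    (hH : IsCDSubgroup H) (hK : IsCDSubgroup K) :
    H.index * K.index ≤ (H ⊔ K).index * (H ⊓ K).index := by
  have hC := Subgroup.index_centralizer_sup_mul_index_centralizer_inf_le H K
  have hμ : cdMeasure H * cdMeasure K ≤ cdMeasure (H ⊔ K) * cdMeasure (H ⊓ K) := by
    rw [hH, hK]
    exact Nat.mul_le_mul (cdMu_le_cdMeasure _) (cdMu_le_cdMeasure _)
  simp only [cdMeasure, mul_mul_mul_comm _ (Subgroup.centralizer _).index] at hμ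
  exact Nat.le_of_mul_le_mul_right (hμ.trans (Nat.mul_le_mul_left _ hC)) <| Nat.pos_of_ne_zero <|
    mul_ne_zero Subgroup.index_ne_zero_of_finite Subgroup.index_ne_zero_of_finite

theorem stmt_0 {G : Type*} [Group G] [Finite G] (H K : Subgroup G)
    (hH : IsCDSubgroup H) (hK : IsCDSubgroup K) :
    (H : Set G) * (K : Set G) = (K : Set G) * (H : Set G) ∧
      ∃ S : Subgroup G, (S : Set G) = (H : Set G) * (K : Set G) := by
  have hHK := Subgroup.coe_sup_eq_mul_of_index_mul_index_le (hH.index_mul_index_le hK)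
  have hKH := Subgroup.coe_sup_eq_mul_of_index_mul_index_le (hK.index_mul_index_le hH)
  rw [sup_comm] at hKH
  exact ⟨hHK.symm.trans hKH, H ⊔ K, hHK⟩
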